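/- For every integer n ≥ 1 with n ≠ 2, every transposed Poisson structure on the Schrödinger algebra S_n is trivial: any commutative associative multiplication · on S_n such that (S_n, ·, [·,·]) is a transposed Poisson algebra satisfies x·y = 0 for all x, y ∈ S_n. -/

import Mathlib

noncomputable section

open Submodule

/-- Index type for the standard basis
`{e, f, h, z, x_i, y_i (1 ≤ i ≤ n), s_{jk} (1 ≤ j < k ≤ n)}`
of the Schrödinger algebra `S_n` (indices shifted to start from `0`). -/
inductive SIdx (n : ℕ) : Type where
  | E : SIdx n
  | F : SIdx n
  | H : SIdx n
  | Z : SIdx n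
  | X : Fin n → SIdx n
  | Y : Fin n → SIdx n
  | S : (j k : Fin n) → j < k → SIdx n

/-- Kronecker delta with values in `ℂ`. -/
def kd {n : ℕ} (i j : Fin n) : ℂ := if i = j then 1 else 0

variable {n : ℕ} {L : Type*} [LieRing L] [LieAlgebra ℂ L]

/-- The element `s_{jk}` for arbitrary indices, with the convention
`s_{kj} = -s_{jk}` and `s_{jj} = 0`. -/
def sg (b : Module.Basis (SIdx n) ℂ L) (j k : Fin n) : L :=
  if h : j < k then b (.S j k h)
  else if h' : k < j then - b (.S k j h')
  else 0

/-- A basis of a complex Lie algebra indexed by `SIdx n` realizes the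
Schrödinger algebra `S_n` if the brackets of basis vectors are as follows
(all brackets of basis vectors not determined by the relations below and
anticommutativity are zero). -/
structure IsSchrodinger (b : Module.Basis (SIdx n) ℂ L) : Prop where
  lie_e_f : ⁅b .E, b .F⁆ = b .H
  lie_h_e : ⁅b .H, b .E⁆ = (2 : ℂ) • b .E
  lie_f_h : ⁅b .F, b .H⁆ = (2 : ℂ) • b .F
  lie_x_y : ∀ i j, ⁅b (.X i), b (.Y j)⁆ = kd i j • b .Z
  lie_x_x : ∀ i j, ⁅b (.X i), b (.X j)⁆ = 0
  lie_y_y : ∀ i j, ⁅b (.Y i), b (.Y j)⁆ = 0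
  lie_h_x : ∀ i, ⁅b .H, b (.X i)⁆ = b (.X i)
  lie_h_y : ∀ i, ⁅b .H, b (.Y i)⁆ = - b (.Y i)
  lie_e_y : ∀ i, ⁅b .E, b (.Y i)⁆ = b (.X i)
  lie_e_x : ∀ i, ⁅b .E, b (.X i)⁆ = 0
  lie_f_x : ∀ i, ⁅b .F, b (.X i)⁆ = b (.Y i)
  lie_f_y : ∀ i, ⁅b .F, b (.Y i)⁆ = 0
  lie_z : ∀ u : SIdx n, ⁅b .Z, b u⁆ = 0
  lie_s_x : ∀ j k i, ⁅sg b j k, b (.X i)⁆ = kd k i • b (.X j) - kd j i • b (.X k)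
  lie_s_y : ∀ j k i, ⁅sg b j k, b (.Y i)⁆ = kd k i • b (.Y j) - kd j i • b (.Y k)
  lie_s_s : ∀ j k l m, ⁅sg b j k, sg b l m⁆ =
      kd l k • sg b j m + kd j m • sg b k l + kd m k • sg b l j + kd l j • sg b m k
  lie_e_s : ∀ j k, ⁅b .E, sg b j k⁆ = 0
  lie_f_s : ∀ j k, ⁅b .F, sg b j k⁆ = 0
  lie_h_s : ∀ j k, ⁅b .H, sg b j k⁆ = 0

/-- A `1/2`-derivation of a complex Lie algebra: a linear map `φ` with
`φ([x,y]) = (1/2)([φ(x),y] + [x,φ(y)])`. -/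
def IsHalfDeriv (φ : L →ₗ[ℂ] L) : Prop :=
  ∀ x y : L, φ ⁅x, y⁆ = (2⁻¹ : ℂ) • (⁅φ x, y⁆ + ⁅x, φ y⁆)

/-- The set of basis vectors spanning the even part `(S_n)₀`:
`{e, f, h, z, s_{kl}}`. -/
def evenSet (b : Module.Basis (SIdx n) ℂ L) : Set L :=
  {v | v = b .E ∨ v = b .F ∨ v = b .H ∨ v = b .Z ∨ ∃ j k, ∃ h : j < k, v = b (.S j k h)}

/-- The set of basis vectors spanning the odd part `(S_n)₁`: `{x_i, y_i}`. -/
def oddSet (b : Module.Basis (SIdx n) ℂ L) : Set L :=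
  {v | ∃ i : Fin n, v = b (.X i) ∨ v = b (.Y i)}


/-!
Every left multiplication `w · _` of a transposed Poisson structure is a `1/2`-derivation. A
`1/2`-derivation `ψ` of `S_n` acts as a scalar `λ` on `e, f, h, z, x_i, y_i`: the relations of the
`𝔰𝔩₂`-triple force `ψ h = λ h`, after which `ψ v - λ v` is an `ad h`-eigenvector of twice the
weight of `v`; this pins down `ψ e`, `ψ f`, and, through `[e, y_i] = x_i`, also `ψ x_i`, `ψ y_i`
and `ψ z = ψ [x_i, y_i]`. If `λ = 0`, the values `ψ s_{jk}` commute with `e, f, x_i`, hence are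
central, and for `n ≥ 3` writing `s_{lm} = [s_{lp}, s_{pm}]` shows that `ψ = 0`.

Commutativity gives `λ(e) h = e · h = h · e = λ(h) e`, so `λ(e) = 0` and `e · _ = 0`. Then
`λ(w) e = w · e = e · w = 0` for every `w`, so every `w · _` vanishes.
-/

lemma Module.Basis.eq_smul_of_repr_eq_zero {ι R M : Type*} [Semiring R] [AddCommMonoid M]
    [Module R M] (b : Module.Basis ι R M) {v : M} (i : ι) (h : ∀ j ≠ i, b.repr v j = 0) :
    v = b.repr v i • b i := by
  classical
  refine b.ext_elem fun j => ?_
  by_cases hj : j = i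
  · simp [hj]
  · simp [Ne.symm hj, h j hj]

lemma sg_of_lt (b : Module.Basis (SIdx n) ℂ L) {j k : Fin n} (h : j < k) :
    sg b j k = b (.S j k h) :=
  dif_pos h

lemma kd_self (i : Fin n) : kd i i = 1 := if_pos rfl

lemma kd_of_ne {i j : Fin n} (h : i ≠ j) : kd i j = 0 := if_neg h

namespace SIdx

def weight : SIdx n → ℂ
  | .E => 2
  | .F => -2
  | .X _ => 1
  | .Y _ => -1
  | _ => 0

/-- The basis vectors `s_{jk}`, which span a copy of `𝔰𝔬(n)`. -/
def IsRotation : SIdx n → Prop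
  | .S _ _ _ => True
  | _ => False

lemma IsRotation.exists_eq {u : SIdx n} (hu : u.IsRotation) : ∃ j k h, u = .S j k h := by
  cases u <;> simp_all [IsRotation]

end SIdx

def coordLieE (b : Module.Basis (SIdx n) ℂ L) : SIdx n → Module.Dual ℂ L
  | .E => (-2 : ℂ) • b.coord .H
  | .H => b.coord .F
  | .X i => b.coord (.Y i)
  | _ => 0

def coordLieF (b : Module.Basis (SIdx n) ℂ L) : SIdx n → Module.Dual ℂ L
  | .F => (2 : ℂ) • b.coord .H
  | .H => - b.coord .E
  | .Y i => b.coord (.X i)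
  | _ => 0

namespace IsSchrodinger

variable {b : Module.Basis (SIdx n) ℂ L} (hb : IsSchrodinger b)
include hb

lemma lie_h_f : ⁅b .H, b .F⁆ = (-2 : ℂ) • b .F := by
  rw [← lie_skew, hb.lie_f_h, ← neg_smul]

lemma lie_e_h : ⁅b .E, b .H⁆ = (-2 : ℂ) • b .E := by
  rw [← lie_skew, hb.lie_h_e, ← neg_smul]

lemma lie_f_e : ⁅b .F, b .E⁆ = - b .H := by
  rw [← lie_skew, hb.lie_e_f]

lemma lie_x_e (i : Fin n) : ⁅b (.X i), b .E⁆ = 0 := by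
  rw [← lie_skew, hb.lie_e_x, neg_zero]

lemma lie_x_f (i : Fin n) : ⁅b (.X i), b .F⁆ = - b (.Y i) := by
  rw [← lie_skew, hb.lie_f_x]

lemma lie_x_h (i : Fin n) : ⁅b (.X i), b .H⁆ = - b (.X i) := by
  rw [← lie_skew, hb.lie_h_x]

lemma lie_e_S {j k : Fin n} (h : j < k) : ⁅b .E, b (.S j k h)⁆ = 0 := by
  rw [← sg_of_lt b h, hb.lie_e_s]

lemma lie_f_S {j k : Fin n} (h : j < k) : ⁅b .F, b (.S j k h)⁆ = 0 := by
  rw [← sg_of_lt b h, hb.lie_f_s]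

lemma lie_h_S {j k : Fin n} (h : j < k) : ⁅b .H, b (.S j k h)⁆ = 0 := by
  rw [← sg_of_lt b h, hb.lie_h_s]

lemma lie_x_S (i : Fin n) {j k : Fin n} (h : j < k) :
    ⁅b (.X i), b (.S j k h)⁆ = kd j i • b (.X k) - kd k i • b (.X j) := by
  rw [← lie_skew, ← sg_of_lt b h, hb.lie_s_x, neg_sub]

lemma coord_comp_ad_h (u : SIdx n) :
    (b.coord u).comp (LieAlgebra.ad ℂ L (b .H)) = u.weight • b.coord u := by
  classical
  refine b.ext fun i => ?_
  rcases i with _|_|_|_|i|i|⟨j, k, hjk⟩ <;> rcases u with _|_|_|_|u|u|⟨l, m, hlm⟩ <;>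
    simp [SIdx.weight, hb.lie_h_e, hb.lie_h_f, hb.lie_h_x, hb.lie_h_y, hb.lie_h_S,
      ← lie_skew (b .H) (b .Z), hb.lie_z, Finsupp.single_apply]

lemma coord_comp_ad_e (u : SIdx n) :
    (b.coord u).comp (LieAlgebra.ad ℂ L (b .E)) = coordLieE b u := by
  classical
  refine b.ext fun i => ?_
  rcases i with _|_|_|_|i|i|⟨j, k, hjk⟩ <;> rcases u with _|_|_|_|u|u|⟨l, m, hlm⟩ <;>
    simp [coordLieE, hb.lie_e_f, hb.lie_e_h, hb.lie_e_x, hb.lie_e_y, hb.lie_e_S,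
      ← lie_skew (b .E) (b .Z), hb.lie_z, Finsupp.single_apply]

lemma coord_comp_ad_f (u : SIdx n) :
    (b.coord u).comp (LieAlgebra.ad ℂ L (b .F)) = coordLieF b u := by
  classical
  refine b.ext fun i => ?_
  rcases i with _|_|_|_|i|i|⟨j, k, hjk⟩ <;> rcases u with _|_|_|_|u|u|⟨l, m, hlm⟩ <;>
    simp [coordLieF, hb.lie_f_e, hb.lie_f_h, hb.lie_f_x, hb.lie_f_y, hb.lie_f_S,
      ← lie_skew (b .F) (b .Z), hb.lie_z, Finsupp.single_apply]

lemma coord_X_comp_ad_x {j k : Fin n} (hjk : j < k) :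
    (b.coord (.X k)).comp (LieAlgebra.ad ℂ L (b (.X j))) = b.coord (.S j k hjk) := by
  classical
  refine b.ext fun i => ?_
  rcases i with _|_|_|_|i|i|⟨l, m, hlm⟩ <;>
    simp [hb.lie_x_e, hb.lie_x_f, hb.lie_x_h, hb.lie_x_x, hb.lie_x_y, hb.lie_x_S,
      ← lie_skew (b (.X j)) (b .Z), hb.lie_z, Finsupp.single_apply, kd, hjk.ne]
  case Y => split_ifs <;> simp
  case S =>
    split_ifs <;> simp_all [Finsupp.single_apply]
    exact (hlm.trans hjk).ne

lemma repr_lie_h (v : L) (u : SIdx n) : b.repr ⁅b .H, v⁆ u = u.weight * b.repr v u := by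
  simpa using LinearMap.congr_fun (hb.coord_comp_ad_h u) v

lemma repr_lie_e (v : L) (u : SIdx n) : b.repr ⁅b .E, v⁆ u = coordLieE b u v :=
  LinearMap.congr_fun (hb.coord_comp_ad_e u) v

lemma repr_lie_f (v : L) (u : SIdx n) : b.repr ⁅b .F, v⁆ u = coordLieF b u v :=
  LinearMap.congr_fun (hb.coord_comp_ad_f u) v

lemma repr_lie_x_X {j k : Fin n} (hjk : j < k) (v : L) :
    b.repr ⁅b (.X j), v⁆ (.X k) = b.repr v (.S j k hjk) :=
  LinearMap.congr_fun (hb.coord_X_comp_ad_x hjk) v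

lemma repr_eq_zero_of_lie_h_eq {v : L} {μ : ℂ} (hv : ⁅b .H, v⁆ = μ • v) {u : SIdx n}
    (hu : u.weight ≠ μ) : b.repr v u = 0 := by
  have h := hb.repr_lie_h v u
  rw [hv, map_smul, Finsupp.smul_apply, smul_eq_mul] at h
  have h' : (u.weight - μ) * b.repr v u = 0 := by linear_combination -h
  exact (mul_eq_zero.1 h').resolve_left (sub_ne_zero.2 hu)

lemma eq_smul_z_of_lie_eq_zero {v : L} (he : ⁅b .E, v⁆ = 0) (hf : ⁅b .F, v⁆ = 0)
    (hx : ∀ j, ⁅b (.X j), v⁆ = 0) : v = b.repr v .Z • b .Z := by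
  classical
  have hE := hb.repr_lie_e v
  have hF := hb.repr_lie_f v
  rw [he] at hE
  rw [hf] at hF
  refine b.ext_elem fun u => ?_
  rcases u with _|_|_|_|i|i|⟨j, k, hjk⟩
  · simpa [coordLieF] using hF .H
  · simpa [coordLieE] using (hE .H).symm
  · simpa [coordLieE] using hE .E
  · simp
  · simpa [coordLieF] using (hF (.Y i)).symm
  · simpa [coordLieE] using (hE (.X i)).symm
  · simpa [hx j] using (hb.repr_lie_x_X hjk v).symm

lemma eq_zero_of_lie_h_eq {v : L} {μ : ℂ} (hv : ⁅b .H, v⁆ = μ • v)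
    (hμ : ∀ u : SIdx n, u.weight ≠ μ) : v = 0 :=
  b.ext_elem fun u => by simpa using hb.repr_eq_zero_of_lie_h_eq hv (hμ u)

lemma eq_smul_of_lie_h_eq {v : L} {μ : ℂ} (hv : ⁅b .H, v⁆ = μ • v) (u₀ : SIdx n)
    (hμ : ∀ u : SIdx n, u.weight = μ → u = u₀) : v = b.repr v u₀ • b u₀ :=
  b.eq_smul_of_repr_eq_zero u₀ fun u hu => hb.repr_eq_zero_of_lie_h_eq hv (mt (hμ u) hu)

lemma z_mem_center : b .Z ∈ LieAlgebra.center ℂ L := by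
  have h : LieAlgebra.ad ℂ L (b .Z) = 0 := b.ext hb.lie_z
  refine (LieModule.mem_maxTrivSubmodule ℂ L L _).2 fun v => ?_
  rw [← lie_skew, neg_eq_zero]
  exact LinearMap.congr_fun h v

lemma lie_sg_sg {l m p : Fin n} (hlm : l < m) (hpl : p ≠ l) (hpm : p ≠ m) :
    ⁅sg b l p, sg b p m⁆ = b (.S l m hlm) := by
  simp [hb.lie_s_s, kd_self, kd_of_ne hlm.ne, kd_of_ne hpm.symm, kd_of_ne hpl, sg_of_lt b hlm]

end IsSchrodinger

section HalfDerivation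

variable {ψ : L →ₗ[ℂ] L}

lemma isHalfDeriv_iff_two_smul :
    IsHalfDeriv ψ ↔ ∀ x y, (2 : ℂ) • ψ ⁅x, y⁆ = ⁅ψ x, y⁆ + ⁅x, ψ y⁆ := by
  refine forall₂_congr fun x y => ⟨fun h => ?_, fun h => ?_⟩
  · rw [h, smul_smul]; norm_num
  · rw [← h, smul_smul]; norm_num

lemma IsHalfDeriv.two_smul_apply_lie (hψ : IsHalfDeriv ψ) (x y : L) :
    (2 : ℂ) • ψ ⁅x, y⁆ = ⁅ψ x, y⁆ + ⁅x, ψ y⁆ :=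
  isHalfDeriv_iff_two_smul.1 hψ x y

lemma IsHalfDeriv.lie_apply_sub_smul {h v : L} {c d : ℂ} (hψ : IsHalfDeriv ψ)
    (hh : ψ h = c • h) (hv : ⁅h, v⁆ = d • v) :
    ⁅h, ψ v - c • v⁆ = (2 * d) • (ψ v - c • v) := by
  have key := hψ.two_smul_apply_lie h v
  rw [hv, map_smul, hh, smul_lie, hv] at key
  rw [lie_sub, lie_smul, hv]
  linear_combination (norm := module) -key

lemma IsHalfDeriv.lie_apply_eq_zero {a v : L} (hψ : IsHalfDeriv ψ) (ha : ψ a = 0)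
    (hva : ψ ⁅v, a⁆ = 0) : ⁅ψ v, a⁆ = 0 := by
  have key := hψ.two_smul_apply_lie v a
  rwa [hva, ha, lie_zero, add_zero, smul_zero, eq_comm] at key

end HalfDerivation

namespace IsSchrodinger

variable {b : Module.Basis (SIdx n) ℂ L} (hb : IsSchrodinger b) {ψ : L →ₗ[ℂ] L}
  (hψ : IsHalfDeriv ψ)
include hb hψ

lemma halfDeriv_apply_h : ψ (b .H) = b.repr (ψ (b .H)) .H • b .H := by
  have hA (u : SIdx n) : (4 - u.weight) * b.repr (ψ (b .E)) u = - coordLieE b u (ψ (b .H)) := by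
    have key := congrArg (b.repr · u) (hψ.two_smul_apply_lie (b .H) (b .E))
    simp only [hb.lie_h_e, ← lie_skew (ψ (b .H)), map_smul, map_add, map_neg, Finsupp.smul_apply,
      Finsupp.add_apply, Finsupp.neg_apply, smul_eq_mul, hb.repr_lie_h, hb.repr_lie_e] at key
    linear_combination key
  have hB (u : SIdx n) : (4 + u.weight) * b.repr (ψ (b .F)) u = coordLieF b u (ψ (b .H)) := by
    have key := congrArg (b.repr · u) (hψ.two_smul_apply_lie (b .F) (b .H))
    simp only [hb.lie_f_h, ← lie_skew (ψ (b .F)), map_smul, map_add, map_neg, Finsupp.smul_apply,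
      Finsupp.add_apply, Finsupp.neg_apply, smul_eq_mul, hb.repr_lie_h, hb.repr_lie_f] at key
    linear_combination key
  have hC (u : SIdx n) :
      2 * b.repr (ψ (b .H)) u = - coordLieF b u (ψ (b .E)) + coordLieE b u (ψ (b .F)) := by
    have key := congrArg (b.repr · u) (hψ.two_smul_apply_lie (b .E) (b .F))
    simp only [hb.lie_e_f, ← lie_skew (ψ (b .E)), map_smul, map_add, map_neg, Finsupp.smul_apply,
      Finsupp.add_apply, Finsupp.neg_apply, smul_eq_mul, hb.repr_lie_f, hb.repr_lie_e] at key
    linear_combination key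
  refine b.eq_smul_of_repr_eq_zero .H fun u hu => ?_
  rcases u with _|_|_|_|i|i|⟨j, k, hjk⟩
  · have h1 := hC .E
    have h2 := hB .H
    simp only [coordLieF, LinearMap.zero_apply, neg_zero, coordLieE, neg_smul,
      LinearMap.neg_apply, LinearMap.smul_apply, Module.Basis.coord_apply, smul_eq_mul, zero_add,
      SIdx.weight, add_zero] at h1 h2
    linear_combination (2 / 3 : ℂ) * h1 - (1 / 3 : ℂ) * h2
  · have h1 := hC .F
    have h2 := hA .H
    simp only [coordLieF, LinearMap.smul_apply, Module.Basis.coord_apply, smul_eq_mul, coordLieE,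
      LinearMap.zero_apply, add_zero, SIdx.weight, sub_zero] at h1 h2
    linear_combination (2 / 3 : ℂ) * h1 - (1 / 3 : ℂ) * h2
  · exact absurd rfl hu
  · simpa [coordLieE, coordLieF] using hC .Z
  · have h1 := hC (.X i)
    have h2 := hB (.Y i)
    simp only [coordLieF, LinearMap.zero_apply, neg_zero, coordLieE, Module.Basis.coord_apply,
      zero_add, SIdx.weight] at h1 h2
    linear_combination (3 / 5 : ℂ) * h1 + (1 / 5 : ℂ) * h2
  · have h1 := hC (.Y i)
    have h2 := hA (.X i)
    simp only [coordLieF, Module.Basis.coord_apply, coordLieE, LinearMap.zero_apply, add_zero,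
      SIdx.weight] at h1 h2
    linear_combination (3 / 5 : ℂ) * h1 - (1 / 5 : ℂ) * h2
  · simpa [coordLieE, coordLieF] using hC (.S j k hjk)

lemma halfDeriv_apply_e :
    ψ (b .E) = b.repr (ψ (b .H)) .H • b .E := by
  have hw := hψ.lie_apply_sub_smul (hb.halfDeriv_apply_h hψ) hb.lie_h_e
  refine sub_eq_zero.1 (hb.eq_zero_of_lie_h_eq hw fun u => ?_)
  cases u <;> norm_num [SIdx.weight]

lemma halfDeriv_apply_f :
    ψ (b .F) = b.repr (ψ (b .H)) .H • b .F := by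
  have hw := hψ.lie_apply_sub_smul (hb.halfDeriv_apply_h hψ) hb.lie_h_f
  refine sub_eq_zero.1 (hb.eq_zero_of_lie_h_eq hw fun u => ?_)
  cases u <;> norm_num [SIdx.weight]

lemma halfDeriv_apply_x_and_y (i : Fin n) :
    ψ (b (.X i)) = b.repr (ψ (b .H)) .H • b (.X i) ∧
      ψ (b (.Y i)) = b.repr (ψ (b .H)) .H • b (.Y i) := by
  set c := b.repr (ψ (b .H)) .H
  have hx : ψ (b (.X i)) - c • b (.X i) = _ := hb.eq_smul_of_lie_h_eq
    (hψ.lie_apply_sub_smul (hb.halfDeriv_apply_h hψ) (d := 1) (by rw [one_smul, hb.lie_h_x]))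
    .E fun u => by cases u <;> norm_num [SIdx.weight]
  have hy : ψ (b (.Y i)) - c • b (.Y i) = _ := hb.eq_smul_of_lie_h_eq
    (hψ.lie_apply_sub_smul (hb.halfDeriv_apply_h hψ) (d := -1) (by rw [neg_one_smul, hb.lie_h_y]))
    .F fun u => by cases u <;> norm_num [SIdx.weight]
  set a := b.repr (ψ (b (.X i)) - c • b (.X i)) .E
  set a' := b.repr (ψ (b (.Y i)) - c • b (.Y i)) .F
  rw [sub_eq_iff_eq_add] at hx hy
  -- `2 ψ x_i = [ψ e, y_i] + [e, ψ y_i]` reads `2 a e = a' h`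
  have key := hψ.two_smul_apply_lie (b .E) (b (.Y i))
  rw [hb.lie_e_y, hb.halfDeriv_apply_e hψ, hx, hy, smul_lie, hb.lie_e_y, lie_add, lie_smul,
    lie_smul, hb.lie_e_y, hb.lie_e_f] at key
  have ha : a = 0 := by simpa using congrArg (b.repr · .E) key
  have ha' : a' = 0 := by simpa using (congrArg (b.repr · .H) key).symm
  simp [hx, hy, ha, ha']

lemma halfDeriv_apply_z (hn : 0 < n) : ψ (b .Z) = b.repr (ψ (b .H)) .H • b .Z := by
  let i : Fin n := ⟨0, hn⟩
  have key := hψ.two_smul_apply_lie (b (.X i)) (b (.Y i))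
  rw [hb.lie_x_y, kd_self, one_smul, (hb.halfDeriv_apply_x_and_y hψ i).1,
    (hb.halfDeriv_apply_x_and_y hψ i).2, smul_lie, lie_smul, hb.lie_x_y, kd_self, one_smul] at key
  refine smul_right_injective L (two_ne_zero (α := ℂ)) ?_
  simp only [key]
  module

lemma halfDeriv_apply_basis (hn : 0 < n) {u : SIdx n} (hu : ¬u.IsRotation) :
    ψ (b u) = b.repr (ψ (b .H)) .H • b u := by
  rcases u with _|_|_|_|i|i|_
  · exact hb.halfDeriv_apply_e hψ
  · exact hb.halfDeriv_apply_f hψ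
  · exact hb.halfDeriv_apply_h hψ
  · exact hb.halfDeriv_apply_z hψ hn
  · exact (hb.halfDeriv_apply_x_and_y hψ i).1
  · exact (hb.halfDeriv_apply_x_and_y hψ i).2
  · exact absurd trivial hu

lemma halfDeriv_apply_S (h0 : ∀ u : SIdx n, ¬u.IsRotation → ψ (b u) = 0) {j k : Fin n}
    (hjk : j < k) : ψ (b (.S j k hjk)) = b.repr (ψ (b (.S j k hjk))) .Z • b .Z := by
  have he : ⁅b .E, ψ (b (.S j k hjk))⁆ = 0 := by
    rw [← lie_skew, neg_eq_zero]
    refine hψ.lie_apply_eq_zero (h0 .E not_false) ?_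
    rw [← lie_skew, hb.lie_e_S, neg_zero, map_zero]
  have hf : ⁅b .F, ψ (b (.S j k hjk))⁆ = 0 := by
    rw [← lie_skew, neg_eq_zero]
    refine hψ.lie_apply_eq_zero (h0 .F not_false) ?_
    rw [← lie_skew, hb.lie_f_S, neg_zero, map_zero]
  have hx (i : Fin n) : ⁅b (.X i), ψ (b (.S j k hjk))⁆ = 0 := by
    rw [← lie_skew, neg_eq_zero]
    refine hψ.lie_apply_eq_zero (h0 (.X i) not_false) ?_
    rw [← sg_of_lt b hjk, hb.lie_s_x, map_sub, map_smul, map_smul, h0 (.X j) not_false,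
      h0 (.X k) not_false, smul_zero, smul_zero, sub_self]
  exact hb.eq_smul_z_of_lie_eq_zero he hf hx

lemma halfDeriv_mem_center (h0 : ∀ u : SIdx n, ¬u.IsRotation → ψ (b u) = 0) (v : L) :
    ψ v ∈ LieAlgebra.center ℂ L := by
  have hbasis (u : SIdx n) : ψ (b u) ∈ LieAlgebra.center ℂ L := by
    by_cases hu : u.IsRotation
    · obtain ⟨j, k, hjk, rfl⟩ := hu.exists_eq
      rw [hb.halfDeriv_apply_S hψ h0 hjk]
      exact Submodule.smul_mem _ _ hb.z_mem_center
    · rw [h0 u hu]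
      exact zero_mem _
  have hle : Submodule.span ℂ (Set.range b) ≤ (LieAlgebra.center ℂ L).toSubmodule.comap ψ :=
    Submodule.span_le.2 (Set.range_subset_iff.2 hbasis)
  exact hle (b.span_eq ▸ Submodule.mem_top)

lemma halfDeriv_eq_zero (hn : n ≠ 2) (h0 : ∀ u : SIdx n, ¬u.IsRotation → ψ (b u) = 0) :
    ψ = 0 := by
  refine b.ext fun u => ?_
  by_cases hu : u.IsRotation
  · obtain ⟨l, m, hlm, rfl⟩ := hu.exists_eq
    obtain ⟨p, hpl, hpm⟩ := Fin.exists_ne_and_ne_of_two_lt l m (by omega)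
    have hcentral (v y : L) : ⁅y, ψ v⁆ = 0 :=
      (LieModule.mem_maxTrivSubmodule ℂ L L _).1 (hb.halfDeriv_mem_center hψ h0 v) y
    have key := hψ.two_smul_apply_lie (sg b l p) (sg b p m)
    rw [hb.lie_sg_sg hlm hpl hpm, ← lie_skew, hcentral, hcentral, neg_zero, add_zero] at key
    exact (smul_eq_zero.1 key).resolve_left two_ne_zero
  · exact h0 u hu

end IsSchrodinger

theorem transposed_poisson_trivial_schrodinger_general (n : ℕ) (hn : 1 ≤ n) (hne : n ≠ 2)
    (L : Type*) [LieRing L] [LieAlgebra ℂ L]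
    (b : Module.Basis (SIdx n) ℂ L) (hb : IsSchrodinger b)
    (mul : L →ₗ[ℂ] L →ₗ[ℂ] L)
    (hcomm : ∀ x y : L, mul x y = mul y x)
    (hcompat : ∀ x y w : L, (2 : ℂ) • mul w ⁅x, y⁆ = ⁅mul w x, y⁆ + ⁅x, mul w y⁆) :
    ∀ x y : L, mul x y = 0 := by
  have hψ (w : L) : IsHalfDeriv (mul w) := isHalfDeriv_iff_two_smul.2 fun x y => hcompat x y w
  have hmul (w : L) {u : SIdx n} (hu : ¬u.IsRotation) :
      mul w (b u) = b.repr (mul w (b .H)) .H • b u :=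
    hb.halfDeriv_apply_basis (hψ w) hn hu
  have hmul_e_h : b.repr (mul (b .E) (b .H)) .H = 0 := by
    have key := congrArg (b.repr · .H) <|
      (hmul (b .E) (u := .H) not_false).symm.trans ((hcomm _ _).trans (hmul (b .H) not_false))
    simpa using key
  have hmul_e : mul (b .E) = 0 :=
    hb.halfDeriv_eq_zero (hψ _) hne fun u hu => by rw [hmul _ hu, hmul_e_h, zero_smul]
  intro x y
  have hmul_x_h : b.repr (mul x (b .H)) .H = 0 := by
    have key : b.repr (mul x (b .H)) .H • b .E = 0 := by
      rw [← hmul x (u := .E) not_false, hcomm, hmul_e, LinearMap.zero_apply]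
    exact (smul_eq_zero.1 key).resolve_right (b.ne_zero _)
  rw [hb.halfDeriv_eq_zero (hψ x) hne fun u hu => by rw [hmul x hu, hmul_x_h, zero_smul],
    LinearMap.zero_apply]

/-- For every `n ≥ 1` with `n ≠ 2`, every transposed Poisson
structure on the Schrödinger algebra `S_n` is trivial: every commutative
associative multiplication `·` satisfying `2 w·[x,y] = [w·x, y] + [x, w·y]`
is identically zero. -/
theorem transposed_poisson_trivial_schrodinger (n : ℕ) (hn : 1 ≤ n) (hne : n ≠ 2)
    (L : Type*) [LieRing L] [LieAlgebra ℂ L]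
    (b : Module.Basis (SIdx n) ℂ L) (hb : IsSchrodinger b)
    (mul : L →ₗ[ℂ] L →ₗ[ℂ] L)
    (hcomm : ∀ x y : L, mul x y = mul y x)
    (hassoc : ∀ x y w : L, mul (mul x y) w = mul x (mul y w))
    (hcompat : ∀ x y w : L, (2 : ℂ) • mul w ⁅x, y⁆ = ⁅mul w x, y⁆ + ⁅x, mul w y⁆) :
    ∀ x y : L, mul x y = 0 :=
  transposed_poisson_trivial_schrodinger_general n hn hne L b hb mul hcomm hcompat
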